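/- arXiv:1710.11098 — 2 statements merged into one kernel-verified Lean document; each statement's English description precedes it below -/
import Mathlib

section
/- For integers N ≥ 2 and M ≥ K ≥ 1, the ratio N^M / (N · ∑_{m=1}^{M} (N-1)^{m-1} · (C(M,m) - C(M-K,m))) equals (1 + 1/N + ⋯ + 1/N^{K-1})⁻¹. -/
lemma aux_sum (x : ℚ) (M n : ℕ) (hn : n ≤ M) :
    (x - 1) * ∑ m ∈ Finset.Icc 1 M, (x - 1) ^ (m - 1) * (n.choose m : ℚ)
      = x ^ n - 1 := by
  rw [Finset.mul_sum]
  have h1 : ∀ m ∈ Finset.Icc 1 M,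
      (x - 1) * ((x - 1) ^ (m - 1) * (n.choose m : ℚ))
        = (x - 1) ^ m * (n.choose m : ℚ) := by
    intro m hm
    simp only [Finset.mem_Icc] at hm
    rw [← mul_assoc, ← pow_succ']
    congr 2
    omega
  rw [Finset.sum_congr rfl h1]
  have h2 : ∑ m ∈ Finset.Icc 1 M, (x - 1) ^ m * (n.choose m : ℚ)
      = (∑ m ∈ Finset.range (M + 1), (x - 1) ^ m * (n.choose m : ℚ)) - 1 := by
    rw [Finset.range_eq_Ico, Finset.sum_eq_sum_Ico_succ_bot (by omega)]
    simp [← Finset.Ico_add_one_right_eq_Icc, Finset.range_eq_Ico]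
  rw [h2]
  have h3 : ∑ m ∈ Finset.range (M + 1), (x - 1) ^ m * (n.choose m : ℚ)
      = ∑ m ∈ Finset.range (n + 1), (x - 1) ^ m * (n.choose m : ℚ) := by
    symm
    apply Finset.sum_subset
    · intro m hm; simp only [Finset.mem_range] at *; omega
    · intro m hm hm'
      simp only [Finset.mem_range] at *
      rw [Nat.choose_eq_zero_of_lt (by omega)]
      simp
  rw [h3]
  have h4 : x ^ n = ((x - 1) + 1) ^ n := by ring_nf
  rw [h4, add_pow]
  simp [mul_comm]

theorem stmt_2 (N M K : ℕ) (hN : 2 ≤ N) (hK : 1 ≤ K) (hKM : K ≤ M) :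
    (N : ℚ) ^ M /
        ((N : ℚ) * ∑ m ∈ Finset.Icc 1 M,
          ((N : ℚ) - 1) ^ (m - 1) * ((M.choose m : ℚ) - ((M - K).choose m : ℚ)))
      = (∑ k ∈ Finset.range K, (1 / (N : ℚ)) ^ k)⁻¹ := by
  set x : ℚ := (N : ℚ) with hxdef
  have hx2 : (2 : ℚ) ≤ x := by rw [hxdef]; exact_mod_cast hN
  have hx0 : x ≠ 0 := by linarith
  have hx1 : x - 1 ≠ 0 := by linarith
  have hS : (x - 1) * ∑ m ∈ Finset.Icc 1 M,
      (x - 1) ^ (m - 1) * ((M.choose m : ℚ) - ((M - K).choose m : ℚ))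
      = x ^ M - x ^ (M - K) := by
    have := aux_sum x M M le_rfl
    have h2 := aux_sum x M (M - K) (by omega)
    calc (x - 1) * ∑ m ∈ Finset.Icc 1 M,
        (x - 1) ^ (m - 1) * ((M.choose m : ℚ) - ((M - K).choose m : ℚ))
        = (x - 1) * ∑ m ∈ Finset.Icc 1 M, (x - 1) ^ (m - 1) * (M.choose m : ℚ)
          - (x - 1) * ∑ m ∈ Finset.Icc 1 M, (x - 1) ^ (m - 1) * ((M - K).choose m : ℚ) := by
          rw [← mul_sub, ← Finset.sum_sub_distrib]
          congr 1
          apply Finset.sum_congr rfl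
          intro m _; ring
      _ = x ^ M - x ^ (M - K) := by rw [this, h2]; ring
  have hpow : x ^ M = x ^ (M - K) * x ^ K := by
    rw [← pow_add]; congr 1; omega
  have hxK : (1 : ℚ) < x ^ K := by
    calc (1:ℚ) = 1 ^ K := (one_pow K).symm
    _ < x ^ K := by
      apply pow_lt_pow_left₀ (by linarith) (by norm_num)
      omega
  have hxMK : (0 : ℚ) < x ^ (M - K) := by positivity
  have hne : x ^ M - x ^ (M - K) ≠ 0 := by
    rw [hpow]; nlinarith
  -- RHS geometric sum
  have hr : (1 / x) ≠ 1 := by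
    intro h
    rw [div_eq_one_iff_eq hx0] at h
    linarith
  have hgeom : ∑ k ∈ Finset.range K, (1 / x) ^ k
      = ((1 / x) ^ K - 1) / ((1 / x) - 1) := geom_sum_eq hr K
  -- S as division
  have hSval : ∑ m ∈ Finset.Icc 1 M,
      (x - 1) ^ (m - 1) * ((M.choose m : ℚ) - ((M - K).choose m : ℚ))
      = (x ^ M - x ^ (M - K)) / (x - 1) := by
    field_simp
    linarith [hS]
  rw [hSval, hgeom, inv_div]
  have hxKne : x ^ K ≠ 0 := by positivity
  have h1 : x ^ K - 1 ≠ 0 := by linarith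
  have hiK : (1 / x) ^ K - 1 ≠ 0 := by
    rw [div_pow, one_pow, sub_ne_zero]
    intro h
    rw [div_eq_one_iff_eq hxKne] at h
    linarith
  have hA : x * ((x ^ M - x ^ (M - K)) / (x - 1)) ≠ 0 :=
    mul_ne_zero hx0 (div_ne_zero hne hx1)
  rw [div_eq_div_iff hA hiK, hpow]
  field_simp
  have hxx : x ^ K * x⁻¹ ^ K = 1 := by rw [← mul_pow, mul_inv_cancel₀ hx0, one_pow]
  linear_combination (x - 1) * hxx
end

section
/- Let F be a field, K = 3, and let v₄, v₅, v₆ ∈ F³ with components v_{m(1)}, v_{m(2)}, v_{m(3)} for m ∈ {4,5,6}. Given symbols a_j, b_j, c_j ∈ F indexed by j ∈ {j₁,…,j₁₀}, define d_j = v_{4(1)}a_j + v_{4(2)}b_j + v_{4(3)}c_j, e_j = v_{5(1)}a_j + v_{5(2)}b_j + v_{5(3)}c_j, f_j = v_{6(1)}a_j + v_{6(2)}b_j + v_{6(3)}c_j. If a_j = 0 for all j, then d_{j₁₀} - e_{j₉} + f_{j₈} = -det[[v_{5(2)},v_{6(2)}],[v_{5(3)},v_{6(3)}]]·(b_{j₅}-c_{j₂}+d_{j₁})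 + det[[v_{4(2)},v_{6(2)}],[v_{4(3)},v_{6(3)}]]·(b_{j₆}-c_{j₃}+e_{j₁}) - det[[v_{4(2)},v_{5(2)}],[v_{4(3)},v_{5(3)}]]·(b_{j₇}-c_{j₄}+f_{j₁}) + v_{6(2)}·(b_{j₈}-d_{j₃}+e_{j₂}) - v_{5(2)}·(b_{j₉}-d_{j₄}+f_{j₂}) + v_{4(2)}·(b_{j₁₀}-e_{j₄}+f_{j₃}) + v_{6(3)}·(c_{j₈}-d_{j₆}+e_{j₅}) - v_{5(3)}·(c_{j₉}-d_{j₇}+f_{j₅}) + v_{4(3)}·(c_{j₁₀}-e_{j₇}+f_{j₆}). -/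
/-- Indices `0,…,9` stand for `j₁,…,j₁₀`. -/
theorem stmt_9 (F : Type*) [Field F]
    (v4 v5 v6 : Fin 3 → F) (a b c d e f : Fin 10 → F)
    (hd : ∀ j, d j = v4 0 * a j + v4 1 * b j + v4 2 * c j)
    (he : ∀ j, e j = v5 0 * a j + v5 1 * b j + v5 2 * c j)
    (hf : ∀ j, f j = v6 0 * a j + v6 1 * b j + v6 2 * c j)
    (ha : ∀ j, a j = 0) :
    d 9 - e 8 + f 7 =
        -(Matrix.det !![v5 1, v6 1; v5 2, v6 2]) * (b 4 - c 1 + d 0)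
      + (Matrix.det !![v4 1, v6 1; v4 2, v6 2]) * (b 5 - c 2 + e 0)
      - (Matrix.det !![v4 1, v5 1; v4 2, v5 2]) * (b 6 - c 3 + f 0)
      + v6 1 * (b 7 - d 2 + e 1)
      - v5 1 * (b 8 - d 3 + f 1)
      + v4 1 * (b 9 - e 3 + f 2)
      + v6 2 * (c 7 - d 5 + e 4)
      - v5 2 * (c 8 - d 6 + f 4)
      + v4 2 * (c 9 - e 6 + f 5) := by
  simp only [hd, he, hf, ha, Matrix.det_fin_two_of]
  ring
end
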